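/- arXiv:1708.08009 — 4 statements merged into one kernel-verified Lean document; each statement's English description precedes it below -/
import Mathlib

section
/- Let p be a prime, α ≥ 1, and let K be a field of characteristic 0 equipped with a nonarchimedean absolute value |·| extending the p-adic absolute value on ℚ (normalized so that |p| = p^{-1}). Let d ≥ 1, n₁,…,n_d ≥ 1 be integers, let ζ₁,…,ζ_d, η ∈ K satisfy |ζ_i| = |η| = 1, and let f₁,…,f_d : ℕ → K be functions periodic of period p^α with |f_i(m)| ≤ 1 for all m. Set W = n₁+⋯+n_d and define the weighted multiple harmonic sum H(m) = m^{W} · η^{m} · Σ_{0<m₁<⋯<m_d<m} ∏_{i=1}^{d} f_i(m_i) ζ_i^{m_i} m_i^{-n_i} ∈ K. Then |H(p^α)| ≤ p^{-W}, i.e. the p-adic valuation of the prime weighted multiple harmonic sum H(p^α) is at least the weight W. -/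
/-!
For `0 < m < p^α` the `p`-adic valuation of `m` is below `α`, so `|p^α / m| ≤ p⁻¹`.
Distributing `(p^α)^W = ∏ᵢ (p^α)^{nᵢ}` over each product turns `(p^α)^W · Σ` into a sum of terms
`∏ᵢ fᵢ(mᵢ) ζᵢ^{mᵢ} (p^α / mᵢ)^{nᵢ}`, each of absolute value at most `p^{-W}`; by the ultrametric
inequality so is the sum, and `|η| = 1`.
-/

open scoped Classical

/-- The multiple harmonic sum `Σ_{a<m₁<⋯<m_d<b} ∏_i f_i(m_i) ζ_i^{m_i} m_i^{-n_i}`,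
indexed by strictly increasing tuples in the open interval `(a, b)`. -/
noncomputable def mhsSum (K : Type*) [Field K] {d : ℕ} (n : Fin d → ℕ) (ζ : Fin d → K)
    (f : Fin d → ℕ → K) (a b : ℕ) : K :=
  ∑ m ∈ Finset.filter (fun m : Fin d → ℕ => StrictMono m)
      (Fintype.piFinset fun _ => Finset.Ioo a b),
    ∏ i, f i (m i) * ζ i ^ (m i) * ((m i : K) ^ (n i))⁻¹

lemma padicValNat_lt_of_lt_pow {p m α : ℕ} (hp : 1 < p) (hm : 0 < m) (hlt : m < p ^ α) :
    padicValNat p m < α :=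
  (Nat.pow_lt_pow_iff_right hp).mp
    ((Nat.le_of_dvd hm pow_padicValNat_dvd).trans_lt hlt)

lemma norm_natCast_eq_zpow_neg_padicValNat {p : ℕ} [Fact p.Prime] {K : Type*} [NormedField K]
    (hext : ∀ q : ℚ, ‖(q : K)‖ = ‖(q : ℚ_[p])‖) {m : ℕ} (hm : m ≠ 0) :
    ‖(m : K)‖ = (p : ℝ) ^ (-(padicValNat p m : ℤ)) := by
  rw [← Rat.cast_natCast, hext, Rat.cast_natCast,
    Padic.norm_eq_zpow_neg_valuation (Nat.cast_ne_zero.mpr hm), Padic.valuation_natCast]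

lemma norm_primePow_div_natCast_le {p : ℕ} [hp : Fact p.Prime] {K : Type*} [NormedField K]
    (hext : ∀ q : ℚ, ‖(q : K)‖ = ‖(q : ℚ_[p])‖) {α m : ℕ} (hm : 0 < m) (hlt : m < p ^ α) :
    ‖((p ^ α : ℕ) : K) / m‖ ≤ (p : ℝ)⁻¹ := by
  have hp1 : (1 : ℝ) ≤ p := by exact_mod_cast hp.out.one_lt.le
  have hv := padicValNat_lt_of_lt_pow hp.out.one_lt hm hlt
  rw [norm_div, norm_natCast_eq_zpow_neg_padicValNat hext (pow_pos hp.out.pos α).ne',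
    norm_natCast_eq_zpow_neg_padicValNat hext hm.ne', padicValNat.prime_pow,
    ← zpow_sub₀ (by positivity), ← zpow_neg_one]
  exact zpow_le_zpow_right₀ hp1 (by omega)

lemma pow_sum_mul_mhsSum {K : Type*} [Field K] {d : ℕ} (n : Fin d → ℕ) (ζ : Fin d → K)
    (f : Fin d → ℕ → K) (a b : ℕ) (x : K) :
    x ^ (∑ i, n i) * mhsSum K n ζ f a b =
      ∑ m ∈ Finset.filter (fun m : Fin d → ℕ => StrictMono m)
          (Fintype.piFinset fun _ => Finset.Ioo a b),
        ∏ i, f i (m i) * ζ i ^ (m i) * (x / m i) ^ (n i) := by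
  rw [mhsSum, Finset.mul_sum, ← Finset.prod_pow_eq_pow_sum]
  refine Finset.sum_congr rfl fun m _ => ?_
  rw [← Finset.prod_mul_distrib]
  refine Finset.prod_congr rfl fun i _ => ?_
  rw [div_pow]
  ring

lemma norm_primePow_pow_sum_mul_mhsSum_le {p : ℕ} [Fact p.Prime] {K : Type*}
    [NormedField K] [IsUltrametricDist K] (hext : ∀ q : ℚ, ‖(q : K)‖ = ‖(q : ℚ_[p])‖)
    (α : ℕ) {d : ℕ} (n : Fin d → ℕ) (ζ : Fin d → K) (hζ : ∀ i, ‖ζ i‖ = 1)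
    (f : Fin d → ℕ → K) (hf : ∀ i m, ‖f i m‖ ≤ 1) :
    ‖((p ^ α : ℕ) : K) ^ (∑ i, n i) * mhsSum K n ζ f 0 (p ^ α)‖ ≤ ((p : ℝ) ^ (∑ i, n i))⁻¹ := by
  rw [pow_sum_mul_mhsSum, ← inv_pow, ← Finset.prod_pow_eq_pow_sum]
  refine IsUltrametricDist.norm_sum_le_of_forall_le_of_nonneg (by positivity) fun m hm => ?_
  have hmem := Fintype.mem_piFinset.mp (Finset.mem_filter.mp hm).1
  rw [norm_prod]
  refine Finset.prod_le_prod (fun i _ => norm_nonneg _) fun i _ => ?_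
  obtain ⟨hpos, hlt⟩ := Finset.mem_Ioo.mp (hmem i)
  calc ‖f i (m i) * ζ i ^ m i * (((p ^ α : ℕ) : K) / m i) ^ n i‖
      = ‖f i (m i)‖ * ‖((p ^ α : ℕ) : K) / m i‖ ^ n i := by
        rw [norm_mul, norm_mul, norm_pow, norm_pow, hζ, one_pow, mul_one]
    _ ≤ 1 * (p : ℝ)⁻¹ ^ n i := by
        gcongr
        exacts [hf i (m i), norm_primePow_div_natCast_le hext hpos hlt]
    _ = (p : ℝ)⁻¹ ^ n i := one_mul _

theorem stmt_0_general (p : ℕ) [hp : Fact p.Prime] (α : ℕ)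
    (K : Type*) [NormedField K]
    (hna : ∀ x y : K, ‖x + y‖ ≤ max ‖x‖ ‖y‖)
    (hext : ∀ q : ℚ, ‖(q : K)‖ = ‖(q : ℚ_[p])‖)
    (d : ℕ) (n : Fin d → ℕ)
    (ζ : Fin d → K) (hζ : ∀ i, ‖ζ i‖ = 1) (η : K) (hη : ‖η‖ = 1)
    (f : Fin d → ℕ → K)
    (hf : ∀ i m, ‖f i m‖ ≤ 1) :
    ‖((p ^ α : ℕ) : K) ^ (∑ i, n i) * η ^ (p ^ α) * mhsSum K n ζ f 0 (p ^ α)‖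
      ≤ ((p : ℝ) ^ (∑ i, n i))⁻¹ := by
  have := IsUltrametricDist.isUltrametricDist_of_forall_norm_add_le_max_norm hna
  rw [mul_right_comm, norm_mul, norm_pow, hη, one_pow, mul_one]
  exact norm_primePow_pow_sum_mul_mhsSum_le hext α n ζ hζ f hf

/-- Lemma of §3.2.2, first assertion: a prime weighted multiple harmonic sum
`H(p^α) = (p^α)^W η^{p^α} Σ_{0<m₁<⋯<m_d<p^α} ∏_i f_i(m_i) ζ_i^{m_i} m_i^{-n_i}`
(with `|ζ_i| = |η| = 1` and `f_i` of period `p^α` with values of absolute value `≤ 1`)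
has absolute value at most `p^{-W}` where `W = n₁ + ⋯ + n_d` is the weight. -/
theorem stmt_0 (p : ℕ) [hp : Fact p.Prime] (α : ℕ) (hα : 1 ≤ α)
    (K : Type*) [NormedField K] [CharZero K]
    (hna : ∀ x y : K, ‖x + y‖ ≤ max ‖x‖ ‖y‖)
    (hext : ∀ q : ℚ, ‖(q : K)‖ = ‖(q : ℚ_[p])‖)
    (d : ℕ) (hd : 1 ≤ d) (n : Fin d → ℕ) (hn : ∀ i, 1 ≤ n i)
    (ζ : Fin d → K) (hζ : ∀ i, ‖ζ i‖ = 1) (η : K) (hη : ‖η‖ = 1)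
    (f : Fin d → ℕ → K) (hper : ∀ i m, f i (m + p ^ α) = f i m)
    (hf : ∀ i m, ‖f i m‖ ≤ 1) :
    ‖((p ^ α : ℕ) : K) ^ (∑ i, n i) * η ^ (p ^ α) * mhsSum K n ζ f 0 (p ^ α)‖
      ≤ ((p : ℝ) ^ (∑ i, n i))⁻¹ :=
  stmt_0_general p (hp := hp) α K hna hext d n ζ hζ η hη f hf
end

section
/- Let p be a prime, α ≥ 1, and let K be a field of characteristic 0 equipped with a nonarchimedean absolute value |·| extending the p-adic absolute value on ℚ (normalized so that |p| = p^{-1}). Let d ≥ 1, n₁,…,n_d ≥ 1 be integers, let ζ₁,…,ζ_d, η ∈ K satisfy |ζ_i| = |η| = 1, and let f₁,…,f_d : ℕ → K be functions periodic of period p^α with |f_i(m)| ≤ 1 for all m. Set W = n₁+⋯+n_d and H(p^α) = p^{αW} · η^{p^α} · Σ_{0<m₁<⋯<m_d<p^α} ∏_{i=1}^{d} f_i(m_i) ζ_i^{m_i} m_i^{-n_i}. Define the modified data f'_i(m) = f_i(p^{α-1} m), ζ'_i = ζ_i^{p^{α-1}}, η' = η^{p^{α-1}}, and set H'(p) = p^{W}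 · (η')^{p} · Σ_{0<m₁<⋯<m_d<p} ∏_{i=1}^{d} f'_i(m_i) (ζ'_i)^{m_i} m_i^{-n_i}. Then |H(p^α) − H'(p)| ≤ p^{-(W+1)}; equivalently, p^{-W} H(p^α) and p^{-W} H'(p) are congruent modulo p in the valuation ring of K. -/
open scoped Classical

lemma prod_pow_le_pow_sum_add_one {ι : Type*} [Fintype ι] {c : ℝ} (hc0 : 0 ≤ c) (hc1 : c ≤ 1)
    {x : ι → ℝ} (hx0 : ∀ i, 0 ≤ x i) (hx : ∀ i, x i ≤ c) {n : ι → ℕ} {j : ι}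
    (hxj : x j ≤ c ^ 2) (hnj : 1 ≤ n j) :
    ∏ i, x i ^ n i ≤ c ^ (∑ i, n i + 1) := by
  classical
  rw [← Finset.mul_prod_erase _ _ (Finset.mem_univ j),
    ← Finset.add_sum_erase _ _ (Finset.mem_univ j)]
  calc x j ^ n j * ∏ i ∈ Finset.univ.erase j, x i ^ n i
      ≤ (c ^ 2) ^ n j * ∏ i ∈ Finset.univ.erase j, c ^ n i := by
        refine mul_le_mul (pow_le_pow_left₀ (hx0 j) hxj _)
          (Finset.prod_le_prod (fun i _ => pow_nonneg (hx0 i) _)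
            fun i _ => pow_le_pow_left₀ (hx0 i) (hx i) _)
          (Finset.prod_nonneg fun i _ => pow_nonneg (hx0 i) _) (by positivity)
    _ = c ^ (2 * n j + ∑ i ∈ Finset.univ.erase j, n i) := by
        rw [Finset.prod_pow_eq_pow_sum, ← pow_mul, ← pow_add]
    _ ≤ c ^ (n j + ∑ i ∈ Finset.univ.erase j, n i + 1) :=
        pow_le_pow_of_le_one hc0 hc1 (by omega)

section MultipleHarmonicSums

variable {K : Type*} [Field K] {d : ℕ}

def strictMonoTuples (d a b : ℕ) : Finset (Fin d → ℕ) :=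
  Finset.filter (fun m : Fin d → ℕ => StrictMono m) (Fintype.piFinset fun _ => Finset.Ioo a b)

lemma mem_strictMonoTuples {a b : ℕ} {m : Fin d → ℕ} :
    m ∈ strictMonoTuples d a b ↔ (∀ i, a < m i ∧ m i < b) ∧ StrictMono m := by
  simp [strictMonoTuples]

def mhsTerm (n : Fin d → ℕ) (ζ : Fin d → K) (f : Fin d → ℕ → K) (m : Fin d → ℕ) : K :=
  ∏ i, f i (m i) * ζ i ^ (m i) * ((m i : K) ^ (n i))⁻¹

lemma mhsSum_eq_sum_mhsTerm (n : Fin d → ℕ) (ζ : Fin d → K) (f : Fin d → ℕ → K) (a b : ℕ) :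
    mhsSum K n ζ f a b = ∑ m ∈ strictMonoTuples d a b, mhsTerm n ζ f m :=
  rfl

lemma sum_strictMonoTuples_filter_dvd {M : Type*} [AddCommMonoid M] {q : ℕ} (hq : 0 < q) (N : ℕ)
    (g : (Fin d → ℕ) → M) :
    ∑ m ∈ (strictMonoTuples d 0 (q * N)).filter (fun m => ∀ i, q ∣ m i), g m
      = ∑ m ∈ strictMonoTuples d 0 N, g (fun i => q * m i) := by
  refine Finset.sum_nbij' (fun m i => m i / q) (fun m i => q * m i) ?_ ?_ ?_ ?_ ?_
  · intro m hm
    simp only [Finset.mem_filter, mem_strictMonoTuples] at hm ⊢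
    obtain ⟨⟨hbound, hmono⟩, hdvd⟩ := hm
    refine ⟨fun i => ⟨Nat.div_pos (Nat.le_of_dvd (hbound i).1 (hdvd i)) hq, ?_⟩,
      fun a b hab => Nat.div_lt_div_of_lt_of_dvd (hdvd b) (hmono hab)⟩
    rw [Nat.div_lt_iff_lt_mul hq, mul_comm]
    exact (hbound i).2
  · intro m hm
    simp only [Finset.mem_filter, mem_strictMonoTuples] at hm ⊢
    exact ⟨⟨fun i => ⟨Nat.mul_pos hq (hm.1 i).1, Nat.mul_lt_mul_of_pos_left (hm.1 i).2 hq⟩,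
      fun a b hab => Nat.mul_lt_mul_of_pos_left (hm.2 hab) hq⟩, fun i => dvd_mul_right _ _⟩
  · intro m hm
    funext i
    exact Nat.mul_div_cancel' ((Finset.mem_filter.mp hm).2 i)
  · intro m _
    funext i
    exact Nat.mul_div_cancel_left _ hq
  · intro m hm
    congr 1
    funext i
    exact (Nat.mul_div_cancel' ((Finset.mem_filter.mp hm).2 i)).symm

lemma mhsTerm_mul_left (n : Fin d → ℕ) (ζ : Fin d → K) (f : Fin d → ℕ → K) (q : ℕ)
    (m : Fin d → ℕ) :
    mhsTerm n ζ f (fun i => q * m i)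
      = ((q : K) ^ ∑ i, n i)⁻¹ * mhsTerm n (fun i => ζ i ^ q) (fun i m => f i (q * m)) m := by
  simp only [mhsTerm, ← Finset.prod_pow_eq_pow_sum, ← Finset.prod_inv_distrib,
    ← Finset.prod_mul_distrib]
  refine Finset.prod_congr rfl fun i _ => ?_
  rw [Nat.cast_mul, mul_pow, mul_inv, pow_mul]
  ring

lemma pow_mul_mhsSum_sub_eq_sum_not_dvd (n : Fin d → ℕ) (ζ : Fin d → K) (f : Fin d → ℕ → K)
    {q : ℕ} (hq : 0 < q) (hqK : (q : K) ≠ 0) (N : ℕ) :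
    ((q * N : ℕ) : K) ^ (∑ i, n i) * mhsSum K n ζ f 0 (q * N)
        - (N : K) ^ (∑ i, n i) * mhsSum K n (fun i => ζ i ^ q) (fun i m => f i (q * m)) 0 N
      = ∑ m ∈ (strictMonoTuples d 0 (q * N)).filter (fun m => ¬ ∀ i, q ∣ m i),
          ((q * N : ℕ) : K) ^ (∑ i, n i) * mhsTerm n ζ f m := by
  rw [← Finset.mul_sum, mhsSum_eq_sum_mhsTerm, mhsSum_eq_sum_mhsTerm,
    ← Finset.sum_filter_add_sum_filter_not _ (fun m : Fin d → ℕ => ∀ i, q ∣ m i),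
    sum_strictMonoTuples_filter_dvd hq]
  simp only [mhsTerm_mul_left, ← Finset.mul_sum, Nat.cast_mul, mul_pow]
  field_simp
  ring

end MultipleHarmonicSums

section Norms

variable {K : Type*} [NormedField K] {d : ℕ}

lemma norm_pow_mul_mhsTerm_le {n : Fin d → ℕ} {ζ : Fin d → K} {f : Fin d → ℕ → K}
    (hζ : ∀ i, ‖ζ i‖ = 1) (hf : ∀ i m, ‖f i m‖ ≤ 1) (x : K) (m : Fin d → ℕ) :
    ‖x ^ (∑ i, n i) * mhsTerm n ζ f m‖ ≤ ∏ i, (‖x‖ / ‖(m i : K)‖) ^ n i := by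
  rw [mhsTerm, ← Finset.prod_pow_eq_pow_sum, ← Finset.prod_mul_distrib, norm_prod]
  refine Finset.prod_le_prod (fun i _ => norm_nonneg _) fun i _ => ?_
  rw [norm_mul, norm_mul, norm_mul, norm_pow, norm_pow, hζ, one_pow, mul_one, norm_inv, norm_pow,
    div_pow, div_eq_mul_inv, mul_left_comm]
  exact mul_le_of_le_one_left (by positivity) (hf i (m i))

section PadicNorm

variable {p : ℕ} [hp : Fact p.Prime]

lemma norm_natCast_eq_padicNorm (hext : ∀ q : ℚ, ‖(q : K)‖ = ‖(q : ℚ_[p])‖) (m : ℕ) :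
    ‖(m : K)‖ = ‖(m : ℚ_[p])‖ := by
  simpa using hext m

lemma norm_natCast_prime (hext : ∀ q : ℚ, ‖(q : K)‖ = ‖(q : ℚ_[p])‖) :
    ‖(p : K)‖ = (p : ℝ)⁻¹ := by
  rw [norm_natCast_eq_padicNorm hext, Padic.norm_p]

lemma norm_natCast_prime_le_one (hext : ∀ q : ℚ, ‖(q : K)‖ = ‖(q : ℚ_[p])‖) :
    ‖(p : K)‖ ≤ 1 := by
  rw [norm_natCast_prime hext]
  exact inv_le_one_of_one_le₀ (by exact_mod_cast hp.out.one_le)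

/-- Writing `m = p^e u` with `p ∤ u`, the hypothesis says `e < k`, and `‖m‖ = ‖p‖^e`. -/
lemma norm_pow_le_mul_norm_natCast_of_not_dvd (hext : ∀ q : ℚ, ‖(q : K)‖ = ‖(q : ℚ_[p])‖)
    {k m : ℕ} (h : ¬ p ^ k ∣ m) :
    ‖(p : K)‖ ^ k ≤ ‖(p : K)‖ * ‖(m : K)‖ := by
  have hm : m ≠ 0 := by rintro rfl; exact h (dvd_zero _)
  obtain ⟨e, u, hu, rfl⟩ := Nat.exists_eq_pow_mul_and_not_dvd hm p hp.out.ne_one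
  have hek : e < k := by
    by_contra! hke
    exact h (Dvd.dvd.mul_right (pow_dvd_pow p hke) u)
  have hu1 : ‖(u : K)‖ = 1 := by
    rw [norm_natCast_eq_padicNorm hext, Padic.norm_natCast_eq_one_iff,
      Nat.Prime.coprime_iff_not_dvd hp.out]
    exact hu
  rw [Nat.cast_mul, Nat.cast_pow, norm_mul, norm_pow, hu1, mul_one, ← pow_succ']
  exact pow_le_pow_of_le_one (norm_nonneg _) (norm_natCast_prime_le_one hext) hek

lemma norm_pow_mul_mhsTerm_le_of_not_dvd [CharZero K]
    (hext : ∀ q : ℚ, ‖(q : K)‖ = ‖(q : ℚ_[p])‖) {n : Fin d → ℕ} (hn : ∀ i, 1 ≤ n i)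
    {ζ : Fin d → K} (hζ : ∀ i, ‖ζ i‖ = 1) {f : Fin d → ℕ → K} (hf : ∀ i m, ‖f i m‖ ≤ 1)
    {k : ℕ} {m : Fin d → ℕ} (hm : ∀ i, 0 < m i ∧ m i < p ^ (k + 1)) (hdvd : ¬ ∀ i, p ^ k ∣ m i) :
    ‖((p ^ (k + 1) : ℕ) : K) ^ (∑ i, n i) * mhsTerm n ζ f m‖ ≤ ‖(p : K)‖ ^ (∑ i, n i + 1) := by
  obtain ⟨j, hj⟩ := not_forall.mp hdvd
  have hpos : ∀ i, 0 < ‖(m i : K)‖ := fun i => norm_pos_iff.mpr (by exact_mod_cast (hm i).1.ne')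
  refine (norm_pow_mul_mhsTerm_le hζ hf _ m).trans
    (prod_pow_le_pow_sum_add_one (norm_nonneg _) (norm_natCast_prime_le_one hext)
      (fun i => by positivity) (fun i => ?_) ?_ (hn j))
  · rw [div_le_iff₀ (hpos i), Nat.cast_pow, norm_pow]
    exact norm_pow_le_mul_norm_natCast_of_not_dvd hext
      (Nat.not_dvd_of_pos_of_lt (hm i).1 (hm i).2)
  · rw [div_le_iff₀ (hpos j), Nat.cast_pow, norm_pow, pow_succ', sq, mul_assoc]
    exact mul_le_mul_of_nonneg_left (norm_pow_le_mul_norm_natCast_of_not_dvd hext hj)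
      (norm_nonneg _)

end PadicNorm

end Norms

theorem stmt_1_general (p : ℕ) [hp : Fact p.Prime] (α : ℕ) (hα : 1 ≤ α)
    (K : Type*) [NormedField K] [CharZero K]
    (hna : ∀ x y : K, ‖x + y‖ ≤ max ‖x‖ ‖y‖)
    (hext : ∀ q : ℚ, ‖(q : K)‖ = ‖(q : ℚ_[p])‖)
    (d : ℕ) (n : Fin d → ℕ) (hn : ∀ i, 1 ≤ n i)
    (ζ : Fin d → K) (hζ : ∀ i, ‖ζ i‖ = 1) (η : K) (hη : ‖η‖ = 1)
    (f : Fin d → ℕ → K)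
    (hf : ∀ i m, ‖f i m‖ ≤ 1) :
    ‖((p ^ α : ℕ) : K) ^ (∑ i, n i) * η ^ (p ^ α) * mhsSum K n ζ f 0 (p ^ α)
        - ((p : ℕ) : K) ^ (∑ i, n i) * (η ^ (p ^ (α - 1))) ^ p *
            mhsSum K n (fun i => ζ i ^ (p ^ (α - 1))) (fun i m => f i (p ^ (α - 1) * m)) 0 p‖
      ≤ ((p : ℝ) ^ (∑ i, n i + 1))⁻¹ := by
  have := IsUltrametricDist.isUltrametricDist_of_forall_norm_add_le_max_norm hna
  obtain ⟨k, rfl⟩ : ∃ k, α = k + 1 := ⟨α - 1, by omega⟩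
  have hsplit := pow_mul_mhsSum_sub_eq_sum_not_dvd n ζ f (pow_pos hp.out.pos k)
    (Nat.cast_ne_zero.mpr (pow_ne_zero k hp.out.ne_zero)) p
  rw [← pow_succ] at hsplit
  rw [Nat.add_sub_cancel, ← pow_mul, ← pow_succ]
  calc _ = ‖η ^ p ^ (k + 1)‖ *
          ‖((p ^ (k + 1) : ℕ) : K) ^ (∑ i, n i) * mhsSum K n ζ f 0 (p ^ (k + 1))
            - (p : K) ^ (∑ i, n i) *
              mhsSum K n (fun i => ζ i ^ p ^ k) (fun i m => f i (p ^ k * m)) 0 p‖ := by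
        rw [← norm_mul]; congr 1; ring
    _ ≤ ‖(p : K)‖ ^ (∑ i, n i + 1) := by
        rw [norm_pow, hη, one_pow, one_mul, hsplit]
        refine IsUltrametricDist.norm_sum_le_of_forall_le_of_nonneg (by positivity) fun m hm => ?_
        rw [Finset.mem_filter, mem_strictMonoTuples] at hm
        exact norm_pow_mul_mhsTerm_le_of_not_dvd hext hn hζ hf hm.1.1 hm.2
    _ = ((p : ℝ) ^ (∑ i, n i + 1))⁻¹ := by rw [norm_natCast_prime hext, inv_pow]

/-- Lemma of §3.2.2, congruence assertion: the prime weighted multiple harmonic sum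
`H(p^α)` is congruent modulo `p^{W+1}` to the prime weighted multiple harmonic sum
`H'(p)` attached to the modified data `f'_i(m) = f_i(p^{α-1} m)`, `ζ'_i = ζ_i^{p^{α-1}}`,
`η' = η^{p^{α-1}}`; i.e. `|H(p^α) − H'(p)| ≤ p^{-(W+1)}` where `W = n₁ + ⋯ + n_d`. -/
theorem stmt_1 (p : ℕ) [hp : Fact p.Prime] (α : ℕ) (hα : 1 ≤ α)
    (K : Type*) [NormedField K] [CharZero K]
    (hna : ∀ x y : K, ‖x + y‖ ≤ max ‖x‖ ‖y‖)
    (hext : ∀ q : ℚ, ‖(q : K)‖ = ‖(q : ℚ_[p])‖)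
    (d : ℕ) (hd : 1 ≤ d) (n : Fin d → ℕ) (hn : ∀ i, 1 ≤ n i)
    (ζ : Fin d → K) (hζ : ∀ i, ‖ζ i‖ = 1) (η : K) (hη : ‖η‖ = 1)
    (f : Fin d → ℕ → K) (hper : ∀ i m, f i (m + p ^ α) = f i m)
    (hf : ∀ i m, ‖f i m‖ ≤ 1) :
    ‖((p ^ α : ℕ) : K) ^ (∑ i, n i) * η ^ (p ^ α) * mhsSum K n ζ f 0 (p ^ α)
        - ((p : ℕ) : K) ^ (∑ i, n i) * (η ^ (p ^ (α - 1))) ^ p *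
            mhsSum K n (fun i => ζ i ^ (p ^ (α - 1))) (fun i m => f i (p ^ (α - 1) * m)) 0 p‖
      ≤ ((p : ℝ) ^ (∑ i, n i + 1))⁻¹ :=
  stmt_1_general p (hp := hp) α hα K hna hext d n hn ζ hζ η hη f hf
end

section
/- Let p be a prime, α ≥ 1, and let K be a field of characteristic 0, complete with respect to a nonarchimedean absolute value |·| extending the p-adic absolute value on ℚ (normalized so that |p| = p^{-1}). Let d ≥ 1, n₁,…,n_d ≥ 1 be integers, let ζ₁,…,ζ_d ∈ K satisfy |ζ_i| = 1, and let f₁,…,f_d : ℕ → K be functions periodic of period p^α with |f_i(m)| ≤ 1 for all m. Let u ≥ 1 and set δ = u·p^α. Then the family indexed by (l₁,…,l_d) ∈ ℕ^d whose (l₁,…,l_d)-term is (∏_{i=1}^{d} (−1)^{l_i} binom(n_i+l_i−1, l_i) δ^{l_i} ζ_i^{δ}) · Σ_{0<m₁<⋯<m_d<p^α} ∏_{i=1}^{d} f_i(m_i) ζ_i^{m_i} m_i^{-(n_i+l_i)} is summable in K, and its sum equals the shifted multiple harmonic sum Σ_{δ<m₁<⋯<m_d<δ+p^α} ∏_{i=1}^{d}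 f_i(m_i) ζ_i^{m_i} m_i^{-n_i}. -/
theorem prod_consEquiv_apply {M : Type*} [CommMonoid M] {d : ℕ} (g : Fin (d + 1) → ℕ → M)
    (z : ℕ × (Fin d → ℕ)) :
    ∏ i, g i (Fin.consEquiv (fun _ => ℕ) z i) = g 0 z.1 * ∏ i : Fin d, g i.succ (z.2 i) := by
  simp [Fin.consEquiv, Fin.prod_univ_succ]

section PiProduct

variable {R : Type*} [NormedCommRing R]

theorem summable_norm_prod_apply {d : ℕ} {g : Fin d → ℕ → R}
    (hg : ∀ i, Summable fun l => ‖g i l‖) :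
    Summable fun l : Fin d → ℕ => ‖∏ i, g i (l i)‖ := by
  induction d with
  | zero => exact Summable.of_finite
  | succ d ih =>
    rw [← (Fin.consEquiv fun _ => ℕ).summable_iff]
    refine Summable.of_nonneg_of_le (fun _ => norm_nonneg _) (fun z => ?_)
      ((hg 0).mul_of_nonneg (ih fun i => hg i.succ) (fun _ => norm_nonneg _)
        fun _ => norm_nonneg _)
    simp only [Function.comp_apply, prod_consEquiv_apply]
    exact norm_mul_le _ _

theorem hasSum_prod_apply [CompleteSpace R] {d : ℕ} {g : Fin d → ℕ → R} {s : Fin d → R}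
    (hg : ∀ i, HasSum (g i) (s i)) (hg_norm : ∀ i, Summable fun l => ‖g i l‖) :
    HasSum (fun l : Fin d → ℕ => ∏ i, g i (l i)) (∏ i, s i) := by
  induction d with
  | zero =>
    simp only [Finset.univ_eq_empty, Finset.prod_empty]
    exact hasSum_single (fun _ => 0) fun l hl => absurd (Subsingleton.elim _ _) hl
  | succ d ih =>
    rw [← (Fin.consEquiv fun _ => ℕ).hasSum_iff, Fin.prod_univ_succ]
    have htail := ih (g := fun i => g i.succ) (fun i => hg i.succ) fun i => hg_norm i.succ
    have hprod := summable_mul_of_summable_norm (hg_norm 0)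
      (summable_norm_prod_apply (g := fun i => g i.succ) fun i => hg_norm i.succ)
    simpa only [Function.comp_def, prod_consEquiv_apply] using (hg 0).mul htail hprod

end PiProduct

section BinomialSeries

variable {K : Type*} [NormedField K] {x y : K} {n : ℕ}

theorem negBinomial_term_eq (hx : x ≠ 0) (hn : 1 ≤ n) (l : ℕ) :
    (-1) ^ l * ((n + l - 1).choose l : K) * y ^ l * (x ^ (n + l))⁻¹ =
      ((l + (n - 1)).choose (n - 1) : K) * (-(y / x)) ^ l * (x ^ n)⁻¹ := by
  rw [show n + l - 1 = l + (n - 1) by omega, Nat.choose_symm_add, pow_add,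
    neg_pow (y / x), div_pow]
  field_simp

theorem hasSum_inv_add_pow [CompleteSpace K] (hxy : ‖y‖ < ‖x‖) (hn : 1 ≤ n) :
    HasSum (fun l => (-1) ^ l * ((n + l - 1).choose l : K) * y ^ l * (x ^ (n + l))⁻¹)
      ((x + y) ^ n)⁻¹ := by
  have hx : x ≠ 0 := norm_pos_iff.1 ((norm_nonneg y).trans_lt hxy)
  have hr : ‖-(y / x)‖ < 1 := by
    rwa [norm_neg, norm_div, div_lt_one ((norm_nonneg y).trans_lt hxy)]
  have hsum : ((x + y) ^ n)⁻¹ = 1 / (1 - -(y / x)) ^ (n - 1 + 1) * (x ^ n)⁻¹ := by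
    rw [Nat.sub_add_cancel hn, sub_neg_eq_add, one_add_div hx, div_pow]
    field_simp
  simp_rw [negBinomial_term_eq hx hn, hsum]
  exact (hasSum_choose_mul_geometric_of_norm_lt_one (n - 1) hr).mul_right _

theorem summable_norm_negBinomial_term (hxy : ‖y‖ < ‖x‖) (hn : 1 ≤ n) :
    Summable fun l => ‖(-1) ^ l * ((n + l - 1).choose l : K) * y ^ l * (x ^ (n + l))⁻¹‖ := by
  have hx : x ≠ 0 := norm_pos_iff.1 ((norm_nonneg y).trans_lt hxy)
  have hr : ‖‖-(y / x)‖‖ < 1 := by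
    rwa [norm_norm, norm_neg, norm_div, div_lt_one ((norm_nonneg y).trans_lt hxy)]
  refine .of_nonneg_of_le (fun _ => norm_nonneg _) (fun l => ?_)
    ((hasSum_choose_mul_geometric_of_norm_lt_one (n - 1) hr).summable.mul_right ‖(x ^ n)⁻¹‖)
  rw [negBinomial_term_eq hx hn, norm_mul, norm_mul, norm_pow]
  gcongr
  simpa using Nat.norm_cast_le (α := K) ((l + (n - 1)).choose (n - 1))

end BinomialSeries

theorem Padic.norm_natCast_lt_of_pow_dvd {p : ℕ} [Fact p.Prime] {α a b : ℕ} (ha : p ^ α ∣ a)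
    (hb : ¬p ^ α ∣ b) : ‖(a : ℚ_[p])‖ < ‖(b : ℚ_[p])‖ := by
  have ha' := (Padic.norm_int_le_pow_iff_dvd (p := p) a α).2 (mod_cast ha)
  have hb' := mt (Padic.norm_int_le_pow_iff_dvd (p := p) b α).1 (mod_cast hb)
  push_cast at ha' hb'
  exact ha'.trans_lt (not_le.1 hb')

theorem mhsSum_shift {K : Type*} [Field K] {d : ℕ} (n : Fin d → ℕ) (ζ : Fin d → K)
    (f : Fin d → ℕ → K) (δ N : ℕ) :
    mhsSum K n ζ f δ (δ + N) =
      ∑ m ∈ Finset.filter (fun m : Fin d → ℕ => StrictMono m)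
          (Fintype.piFinset fun _ => Finset.Ioo 0 N),
        ∏ i, f i (m i + δ) * ζ i ^ (m i + δ) * (((m i + δ : ℕ) : K) ^ n i)⁻¹ := by
  symm
  refine Finset.sum_nbij' (fun m j => m j + δ) (fun m j => m j - δ) ?_ ?_
    (fun _ _ => by simp) ?_ fun _ _ => rfl
  all_goals grind [StrictMono]

theorem hasSum_mhsSum_shift {K : Type*} [NormedField K] [CompleteSpace K] {d : ℕ}
    {n : Fin d → ℕ} (hn : ∀ i, 1 ≤ n i) (ζ : Fin d → K) {f : Fin d → ℕ → K} {δ N : ℕ}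
    (hf : ∀ i, Function.Periodic (f i) δ)
    (hδ : ∀ m, 0 < m → m < N → ‖(δ : K)‖ < ‖(m : K)‖) :
    HasSum (fun l : Fin d → ℕ =>
        (∏ i, (-1 : K) ^ (l i) * ((n i + l i - 1).choose (l i) : K) * (δ : K) ^ (l i) *
            ζ i ^ δ) *
          mhsSum K (fun i => n i + l i) ζ f 0 N)
      (mhsSum K n ζ f δ (δ + N)) := by
  rw [mhsSum_shift]
  set T := Finset.filter (fun m : Fin d → ℕ => StrictMono m)
    (Fintype.piFinset fun _ => Finset.Ioo 0 N)
  have hterm : ∀ m ∈ T, HasSum (fun l : Fin d → ℕ => ∏ i, f i (m i) * ζ i ^ (m i + δ) *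
      ((-1) ^ (l i) * ((n i + l i - 1).choose (l i) : K) * (δ : K) ^ (l i) *
        ((m i : K) ^ (n i + l i))⁻¹))
      (∏ i, f i (m i + δ) * ζ i ^ (m i + δ) * (((m i + δ : ℕ) : K) ^ n i)⁻¹) := by
    intro m hm
    simp only [T, Finset.mem_filter, Fintype.mem_piFinset, Finset.mem_Ioo] at hm
    have hlt i : ‖(δ : K)‖ < ‖(m i : K)‖ := hδ (m i) (hm.1 i).1 (hm.1 i).2
    simp only [hf _ _, Nat.cast_add]
    have hsum i := (hasSum_inv_add_pow (hlt i) (hn i)).mul_left (f i (m i) * ζ i ^ (m i + δ))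
    have hsum_norm i := ((summable_norm_negBinomial_term (hlt i) (hn i)).mul_left
      ‖f i (m i) * ζ i ^ (m i + δ)‖).congr fun _ => (norm_mul _ _).symm
    -- elaborated without the goal, which would force a non-pattern unification for `g`
    exact (hasSum_prod_apply hsum hsum_norm :)
  convert hasSum_sum hterm with l
  simp only [mhsSum, T, Finset.mul_sum, ← Finset.prod_mul_distrib]
  refine Finset.sum_congr rfl fun m _ => Finset.prod_congr rfl fun i _ => ?_
  ring

theorem stmt_8_general (p : ℕ) [hp : Fact p.Prime] (α : ℕ)
    (K : Type*) [NormedField K] [CompleteSpace K]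
    (hext : ∀ q : ℚ, ‖(q : K)‖ = ‖(q : ℚ_[p])‖)
    (d : ℕ) (n : Fin d → ℕ) (hn : ∀ i, 1 ≤ n i)
    (ζ : Fin d → K)
    (f : Fin d → ℕ → K) (hper : ∀ i m, f i (m + p ^ α) = f i m)
    (u : ℕ) :
    HasSum (fun l : Fin d → ℕ =>
        (∏ i, (-1 : K) ^ (l i) * ((n i + l i - 1).choose (l i) : K) *
            ((u * p ^ α : ℕ) : K) ^ (l i) * ζ i ^ (u * p ^ α)) *
          mhsSum K (fun i => n i + l i) ζ f 0 (p ^ α))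
      (mhsSum K n ζ f (u * p ^ α) (u * p ^ α + p ^ α)) := by
  have hnorm (k : ℕ) : ‖(k : K)‖ = ‖(k : ℚ_[p])‖ := by simpa using hext k
  refine hasSum_mhsSum_shift hn ζ (fun i => by simpa using Function.Periodic.nat_mul (hper i) u)
    fun m hm hmN => ?_
  rw [hnorm, hnorm]
  exact Padic.norm_natCast_lt_of_pow_dvd (dvd_mul_left _ _)
    fun hdvd => (Nat.le_of_dvd hm hdvd).not_gt hmN

/-- The `p`-adic formula of shifting of multiple harmonic sums (Lemma `shifting` of §6.1
with `m = p^α`, `δ = u p^α`): the family indexed by `(l₁,…,l_d) ∈ ℕ^d` with term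
`(∏_i (−1)^{l_i} C(n_i+l_i−1, l_i) δ^{l_i} ζ_i^{δ}) · Σ_{0<m₁<⋯<m_d<p^α} ∏_i f_i(m_i) ζ_i^{m_i} m_i^{-(n_i+l_i)}`
is summable, with sum the shifted sum `Σ_{δ<m₁<⋯<m_d<δ+p^α} ∏_i f_i(m_i) ζ_i^{m_i} m_i^{-n_i}`. -/
theorem stmt_8 (p : ℕ) [hp : Fact p.Prime] (α : ℕ) (hα : 1 ≤ α)
    (K : Type*) [NormedField K] [CompleteSpace K] [CharZero K]
    (hna : ∀ x y : K, ‖x + y‖ ≤ max ‖x‖ ‖y‖)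
    (hext : ∀ q : ℚ, ‖(q : K)‖ = ‖(q : ℚ_[p])‖)
    (d : ℕ) (hd : 1 ≤ d) (n : Fin d → ℕ) (hn : ∀ i, 1 ≤ n i)
    (ζ : Fin d → K) (hζ : ∀ i, ‖ζ i‖ = 1)
    (f : Fin d → ℕ → K) (hper : ∀ i m, f i (m + p ^ α) = f i m)
    (hf : ∀ i m, ‖f i m‖ ≤ 1)
    (u : ℕ) (hu : 1 ≤ u) :
    HasSum (fun l : Fin d → ℕ =>
        (∏ i, (-1 : K) ^ (l i) * ((n i + l i - 1).choose (l i) : K) *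
            ((u * p ^ α : ℕ) : K) ^ (l i) * ζ i ^ (u * p ^ α)) *
          mhsSum K (fun i => n i + l i) ζ f 0 (p ^ α))
      (mhsSum K n ζ f (u * p ^ α) (u * p ^ α + p ^ α)) :=
  stmt_8_general p (hp := hp) α K hext d n hn ζ f hper u
end

section
/- Let R be a commutative ring, let d ≥ 1, let g₁,…,g_d : ℕ → R, let m ≥ 1 and let 0 = t₀ < t₁ < ⋯ < t_r < t_{r+1} = m be integers. Consider the totally ordered set of 2r+1 labels I₀ < P₁ < I₁ < P₂ < ⋯ < P_r < I_r, where I_j stands for the open interval (t_j, t_{j+1}) and P_j stands for the point t_j. Then Σ_{0<m₁<⋯<m_d<m} ∏_{i=1}^{d} g_i(m_i) = Σ_{φ} ( ∏_{i : φ(i)=P_j for some j} g_i(t_j) ) · ∏_{j=0}^{r} ( Σ_{t_j<u₁<⋯<u_{k_j}<t_{j+1}} ∏_{s=1}^{k_j} g_{i_{j,s}}(u_s) ), where φ ranges over all weakly increasing maps {1,…,d} → {I₀,P₁,I₁,…,P_r,I_r} taking each value P_j at most once, k_j denotes the cardinality of φ^{-1}(I_j), and i_{j,1} < ⋯ < i_{j,k_j}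 are the elements of φ^{-1}(I_j) in increasing order. -/
open scoped Classical

/-- The iterated sum `Σ_{a<u_{i₁}<⋯<u_{i_k}<b} ∏_{i ∈ S} g_i(u_i)`, where
`i₁ < ⋯ < i_k` enumerate the index set `S ⊆ {1,…,d}` in increasing order: sum over
strictly increasing assignments `u : S → (a, b)` of the product `∏_{i ∈ S} g_i(u_i)`. -/
noncomputable def splitSum {R : Type*} [CommRing R] {d : ℕ} (g : Fin d → ℕ → R)
    (S : Finset (Fin d)) (a b : ℕ) : R :=
  ∑ u ∈ Finset.filter (fun u : S → ℕ => StrictMono u)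
      (Fintype.piFinset fun _ : S => Finset.Ioo a b),
    ∏ i : S, g i.1 (u i)

/-!
Label each point of `(0, m)` by the cell of `I₀ < P₁ < I₁ < ⋯ < P_r < I_r` containing it. Since
distinct cells are ordered, the label map `φ` of a strictly increasing `u` is monotone and meets
each point cell at most once, and conversely, for such `φ`, a `u` with `u i` in the cell `φ i` is
strictly increasing iff it is so on each fibre of `φ`. So the sum over the `u` with label map `φ`
is a product over the cells of sums over the fibres, and a point cell `P_j` contributes just
`g i (t j)`.
-/

open Finset Function

section ChainSum

variable {ι α R : Type*} [LinearOrder ι] [DecidableEq ι] [LinearOrder α]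
  [CommSemiring R]

noncomputable def chainSum (g : ι → α → R) (S : Finset ι) (c : Finset α) : R :=
  ∑ u ∈ (Fintype.piFinset fun _ : S => c).filter StrictMono, ∏ i : S, g i.1 (u i)

theorem splitSum_eq_chainSum {R : Type*} [CommRing R] {d : ℕ} (g : Fin d → ℕ → R)
    (S : Finset (Fin d)) (a b : ℕ) : splitSum g S a b = chainSum g S (Ioo a b) := rfl

theorem chainSum_singleton (g : ι → α → R) {S : Finset ι} (hS : #S ≤ 1) (x : α) :
    chainSum g S {x} = ∏ i ∈ S, g i x := by
  have : Subsingleton S := card_le_one_iff_subsingleton_coe.mp hS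
  rw [chainSum, Fintype.piFinset_singleton (fun _ => x),
    filter_singleton, if_pos (Subsingleton.strictMono _), sum_singleton]
  exact prod_coe_sort S fun i => g i x

theorem sum_strictMono_eq_prod_chainSum [Fintype ι] {κ : Type*} [LinearOrder κ] [Fintype κ]
    [DecidableEq κ] (g : ι → α → R) {φ : ι → κ} (hφ : Monotone φ) {c : κ → Finset α}
    (hc : ∀ k l, k < l → ∀ x ∈ c k, ∀ y ∈ c l, x < y) :
    ∑ u ∈ (Fintype.piFinset fun i => c (φ i)).filter StrictMono, ∏ i, g i (u i) =
      ∏ k, chainSum g (univ.filter fun i => φ i = k) (c k) := by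
  have fiber_congr : ∀ (w : ∀ k, ↥(univ.filter fun i => φ i = k) → α) {i k} (h : φ i = k),
      w (φ i) ⟨i, by simp⟩ = w k ⟨i, by simp [h]⟩ := by
    rintro w i k rfl; rfl
  simp only [chainSum]
  rw [prod_univ_sum]
  refine sum_nbij' (fun u k i => u i.1) (fun w i => w (φ i) ⟨i, by simp⟩) ?_ ?_
    (fun _ _ => rfl) ?_ ?_
  · intro u hu
    simp only [mem_filter, Fintype.mem_piFinset] at hu ⊢
    refine fun k => ⟨fun i => ?_, hu.2.comp (Subtype.strictMono_coe _)⟩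
    simpa [(mem_filter.mp i.2).2] using hu.1 i
  · intro w hw
    simp only [mem_filter, Fintype.mem_piFinset] at hw ⊢
    refine ⟨fun i => (hw (φ i)).1 _, fun a b hab => ?_⟩
    obtain h | h := (hφ hab.le).eq_or_lt
    · show w (φ a) _ < w (φ b) _
      rw [fiber_congr w h]
      exact (hw (φ b)).2 (show (⟨a, _⟩ : ↥(univ.filter fun i => φ i = φ b)) < ⟨b, _⟩ from hab)
    · exact hc _ _ h _ ((hw (φ a)).1 _) _ ((hw (φ b)).1 _)
  · intro w _
    funext k i
    exact fiber_congr w (mem_filter.mp i.2).2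
  · intro u _
    rw [← prod_fiberwise univ φ]
    exact prod_congr rfl fun k _ => (prod_coe_sort _ _).symm

theorem chainSum_univ [Fintype ι] (g : ι → α → R) (c : Finset α) :
    chainSum g univ c =
      ∑ u ∈ (Fintype.piFinset fun _ : ι => c).filter StrictMono, ∏ i, g i (u i) := by
  refine sum_nbij' (fun u i => u ⟨i, mem_univ i⟩) (fun u i => u i.1) ?_ ?_ (fun _ _ => rfl)
    (fun _ _ => rfl) fun u _ => prod_coe_sort univ fun i => g i (u ⟨i, mem_univ i⟩)
  all_goals
    intro u hu
    simp only [mem_filter, Fintype.mem_piFinset] at hu ⊢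
    exact ⟨fun i => hu.1 _, fun a b hab => hu.2 hab⟩

end ChainSum

theorem sum_filter_piFinset_eq_sum_sum_filter_piFinset {ι α κ M : Type*} [DecidableEq ι]
    [Fintype ι] [Fintype κ] [AddCommMonoid M] {c : κ → Finset α} (hc : Pairwise (Disjoint on c))
    {s : Finset α} (hs : ∀ x, x ∈ s ↔ ∃ k, x ∈ c k) (p : (ι → α) → Prop) [DecidablePred p]
    (f : (ι → α) → M) :
    ∑ u ∈ (Fintype.piFinset fun _ : ι => s).filter p, f u =
      ∑ φ : ι → κ, ∑ u ∈ (Fintype.piFinset fun i => c (φ i)).filter p, f u := by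
  have hunion : (Fintype.piFinset fun _ : ι => s) =
      univ.biUnion fun φ : ι → κ => Fintype.piFinset fun i => c (φ i) := by
    ext u
    simp only [Fintype.mem_piFinset, mem_biUnion, mem_univ, true_and, hs]
    exact ⟨fun h => ⟨fun i => (h i).choose, fun i => (h i).choose_spec⟩,
      fun ⟨φ, h⟩ i => ⟨φ i, h i⟩⟩
  rw [hunion, filter_biUnion, sum_biUnion]
  intro φ _ ψ _ hφψ
  refine disjoint_filter_filter (disjoint_left.mpr fun u hφ hψ => hφψ (funext fun i => ?_))
  rw [Fintype.mem_piFinset] at hφ hψ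
  by_contra h
  exact disjoint_left.mp (hc h) (hφ i) (hψ i)

theorem pairwise_disjoint_of_lt {α κ : Type*} [LinearOrder α] [LinearOrder κ]
    {c : κ → Finset α} (hc : ∀ k l, k < l → ∀ x ∈ c k, ∀ y ∈ c l, x < y) :
    Pairwise (Disjoint on c) := by
  intro k l hkl
  refine disjoint_left.mpr fun x hk hl => ?_
  rcases hkl.lt_or_gt with h | h
  · exact (hc k l h x hk x hl).false
  · exact (hc l k h x hl x hk).false

theorem monotone_of_strictMono_of_mem {ι α κ : Type*} [Preorder ι] [LinearOrder α]
    [LinearOrder κ] {c : κ → Finset α} (hc : ∀ k l, k < l → ∀ x ∈ c k, ∀ y ∈ c l, x < y)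
    {φ : ι → κ} {u : ι → α} (hu : Monotone u) (hmem : ∀ i, u i ∈ c (φ i)) : Monotone φ := by
  intro a b hab
  by_contra h
  exact (hu hab).not_gt (hc _ _ (not_le.mp h) _ (hmem b) _ (hmem a))

theorem card_fiber_le_card {ι α κ : Type*} [Fintype ι] [DecidableEq κ] {c : κ → Finset α}
    {φ : ι → κ} {u : ι → α} (hu : Injective u) (hmem : ∀ i, u i ∈ c (φ i)) (k : κ) :
    #(univ.filter fun i => φ i = k) ≤ #(c k) :=
  card_le_card_of_injOn u (fun i hi => (mem_filter.mp hi).2 ▸ hmem i) hu.injOn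

section Cells

/-- The cells `I_j = (t j, t (j + 1))` (for `v = 2 j`) and `P_j = {t j}` (for `v = 2 j - 1`). -/
noncomputable def cell (t : ℕ → ℕ) (v : ℕ) : Finset ℕ :=
  if Even v then Ioo (t (v / 2)) (t (v / 2 + 1)) else {t ((v + 1) / 2)}

variable {t : ℕ → ℕ} {r : ℕ}

theorem card_cell_of_odd {v : ℕ} (hv : Odd v) : #(cell t v) = 1 := by
  simp [cell, Nat.not_even_iff_odd.2 hv]


theorem cell_lt_cell (ht : StrictMonoOn t (Set.Iic (r + 1))) {v w : ℕ} (hvw : v < w)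
    (hw : w ≤ 2 * r) {x y : ℕ} (hx : x ∈ cell t v) (hy : y ∈ cell t w) : x < y := by
  have hle : ∀ a b, a ≤ b → b ≤ r + 1 → t a ≤ t b := fun a b hab hb =>
    (ht.le_iff_le (Set.mem_Iic.2 (by omega)) (Set.mem_Iic.2 hb)).2 hab
  have hlt : ∀ a b, a < b → b ≤ r + 1 → t a < t b := fun a b hab hb =>
    (ht.lt_iff_lt (Set.mem_Iic.2 (by omega)) (Set.mem_Iic.2 hb)).2 hab
  simp only [cell, Nat.even_iff] at hx hy
  split_ifs at hx hy with hv hw' <;> simp only [mem_Ioo, mem_singleton] at hx hy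
  · have := hle (v / 2 + 1) (w / 2) (by omega) (by omega); omega
  · have := hle (v / 2 + 1) ((w + 1) / 2) (by omega) (by omega); omega
  · have := hle ((v + 1) / 2) (w / 2) (by omega) (by omega); omega
  · have := hlt ((v + 1) / 2) ((w + 1) / 2) (by omega) (by omega); omega

theorem mem_Ioo_iff_exists_mem_cell (ht : StrictMonoOn t (Set.Iic (r + 1))) {x : ℕ} :
    x ∈ Ioo (t 0) (t (r + 1)) ↔ ∃ v : Fin (2 * r + 1), x ∈ cell t v := by
  have hlt : ∀ a b, a < b → b ≤ r + 1 → t a < t b := fun a b hab hb =>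
    (ht.lt_iff_lt (Set.mem_Iic.2 (by omega)) (Set.mem_Iic.2 hb)).2 hab
  have hle : ∀ a b, a ≤ b → b ≤ r + 1 → t a ≤ t b := fun a b hab hb =>
    (ht.le_iff_le (Set.mem_Iic.2 (by omega)) (Set.mem_Iic.2 hb)).2 hab
  rw [mem_Ioo]
  constructor
  · rintro ⟨hx0, hxr⟩
    -- `x` lies in `(t k, t (k + 1)]` for the least `k` with `x ≤ t (k + 1)`
    have hex : ∃ j, x ≤ t (j + 1) := ⟨r, hxr.le⟩
    set k := Nat.find hex
    have hxk : x ≤ t (k + 1) := Nat.find_spec hex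
    have hkr : k ≤ r := Nat.find_min' hex hxr.le
    have htk : t k < x := by
      rcases Nat.eq_zero_or_pos k with h0 | hpos
      · rwa [h0]
      · have := Nat.find_min hex (Nat.sub_one_lt hpos.ne')
        rwa [Nat.sub_add_cancel hpos, not_le] at this
    rcases hxk.lt_or_eq with hxk' | hxk'
    · refine ⟨⟨2 * k, by omega⟩, ?_⟩
      simp [cell, hxk', htk]
    · have hkr' : k < r := hkr.lt_of_ne (by rintro rfl; omega)
      refine ⟨⟨2 * k + 1, by omega⟩, ?_⟩
      simp only [cell]
      rw [if_neg (by simp), show (2 * k + 1 + 1) / 2 = k + 1 by omega, hxk', mem_singleton]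
  · rintro ⟨⟨v, hv⟩, hx⟩
    simp only [cell, Nat.even_iff] at hx
    split_ifs at hx with hev <;> simp only [mem_Ioo, mem_singleton] at hx
    · have := hle 0 (v / 2) (by omega) (by omega)
      have := hle (v / 2 + 1) (r + 1) (by omega) le_rfl
      omega
    · have := hlt 0 ((v + 1) / 2) (by omega) (by omega)
      have := hlt ((v + 1) / 2) (r + 1) (by omega) le_rfl
      omega

end Cells

theorem prod_chainSum_cell {R : Type*} [CommRing R] {d r : ℕ} (t : ℕ → ℕ) (g : Fin d → ℕ → R)
    {φ : Fin d → Fin (2 * r + 1)}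
    (hφ : ∀ v : Fin (2 * r + 1), Odd (v : ℕ) → #(univ.filter fun i => φ i = v) ≤ 1) :
    ∏ v, chainSum g (univ.filter fun i => φ i = v) (cell t v) =
      (∏ i ∈ univ.filter (fun i => Odd (φ i : ℕ)), g i (t (((φ i : ℕ) + 1) / 2))) *
        ∏ j ∈ range (r + 1),
          splitSum g (univ.filter fun i => (φ i : ℕ) = 2 * j) (t j) (t (j + 1)) := by
  rw [← prod_filter_mul_prod_filter_not univ (fun v : Fin (2 * r + 1) => Odd (v : ℕ))]
  congr 1
  · rw [← prod_fiberwise_of_maps_to (t := univ.filter fun v : Fin (2 * r + 1) => Odd (v : ℕ))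
      (g := φ) (fun i hi => by simpa using hi)]
    refine prod_congr rfl fun v hv => ?_
    have hodd := (mem_filter.mp hv).2
    have hfiber : (univ.filter fun i => Odd (φ i : ℕ)).filter (fun i => φ i = v) =
        univ.filter fun i => φ i = v := by
      ext i
      simp only [mem_filter, mem_univ, true_and, and_iff_right_iff_imp]
      rintro rfl
      exact hodd
    rw [hfiber, cell, if_neg (Nat.not_even_iff_odd.2 hodd), chainSum_singleton _ (hφ v hodd)]
    exact prod_congr rfl fun i hi => by rw [(mem_filter.mp hi).2]
  · refine prod_nbij (fun v => (v : ℕ) / 2) ?_ ?_ ?_ ?_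
    · intro v _
      simp only [mem_range]
      omega
    · intro v hv w hw hvw
      simp only [coe_filter, mem_univ, true_and, Set.mem_ofPred_eq, Nat.not_odd_iff_even] at hv hw
      ext
      simp only at hvw
      grind
    · intro j hj
      simp only [coe_range, Set.mem_Iio] at hj
      exact ⟨⟨2 * j, by omega⟩, by simp, by simp⟩
    · intro v hv
      have hev : Even (v : ℕ) := Nat.not_odd_iff_even.1 (mem_filter.mp hv).2
      rw [cell, if_pos hev, splitSum_eq_chainSum]
      congr 2
      ext i
      rw [Fin.ext_iff]
      grind

theorem stmt_9_general (R : Type*) [CommRing R] (d : ℕ) (g : Fin d → ℕ → R)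
    (m : ℕ) (r : ℕ) (t : ℕ → ℕ)
    (ht0 : t 0 = 0) (htm : t (r + 1) = m) (hmono : ∀ j ≤ r, t j < t (j + 1)) :
    splitSum g Finset.univ 0 m =
      ∑ φ ∈ Finset.filter (fun φ : Fin d → Fin (2 * r + 1) =>
            Monotone φ ∧ ∀ v : Fin (2 * r + 1), Odd (v : ℕ) →
              (Finset.filter (fun i => φ i = v) Finset.univ).card ≤ 1)
          Finset.univ,
        (∏ i ∈ Finset.filter (fun i => Odd ((φ i : ℕ))) Finset.univ,
            g i (t (((φ i : ℕ) + 1) / 2))) *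
          ∏ j ∈ Finset.range (r + 1),
            splitSum g (Finset.filter (fun i => (φ i : ℕ) = 2 * j) Finset.univ)
              (t j) (t (j + 1)) := by
  have ht : StrictMonoOn t (Set.Iic (r + 1)) :=
    strictMonoOn_Iic_of_lt_succ fun j hj => hmono j (Nat.lt_succ_iff.mp hj)
  have hcell : ∀ v w : Fin (2 * r + 1), v < w → ∀ x ∈ cell t v, ∀ y ∈ cell t w, x < y :=
    fun v w hvw x hx y hy => cell_lt_cell ht hvw (by omega) hx hy
  rw [splitSum_eq_chainSum, chainSum_univ,
    sum_filter_piFinset_eq_sum_sum_filter_piFinset (pairwise_disjoint_of_lt hcell)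
      fun x => by rw [← mem_Ioo_iff_exists_mem_cell ht, ht0, htm],
    ← sum_subset (subset_univ _)]
  · refine sum_congr rfl fun φ hφ => ?_
    rw [sum_strictMono_eq_prod_chainSum g (mem_filter.mp hφ).2.1 hcell,
      prod_chainSum_cell t g (mem_filter.mp hφ).2.2]
  · intro φ _ hφ
    refine sum_eq_zero fun u hu => absurd ?_ hφ
    simp only [mem_filter, Fintype.mem_piFinset] at hu
    have hcard := card_fiber_le_card (c := fun v : Fin (2 * r + 1) => cell t v) hu.2.injective hu.1
    exact mem_filter.mpr ⟨mem_univ _, monotone_of_strictMono_of_mem hcell hu.2.monotone hu.1,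
      fun v hv => (hcard v).trans (card_cell_of_odd hv).le⟩

/-- Formula of splitting of multiple harmonic sums (Lemma `splitting` of §6.1).
Given intermediate points `0 = t₀ < t₁ < ⋯ < t_r < t_{r+1} = m`, encode the totally
ordered set of labels `I₀ < P₁ < I₁ < ⋯ < P_r < I_r` as `Fin (2r+1)`, with even index
`2j ↔ I_j` and odd index `2j−1 ↔ P_j`.  Then
`Σ_{0<m₁<⋯<m_d<m} ∏_i g_i(m_i)` equals the sum, over all weakly increasing maps
`φ : {1,…,d} → {I₀,P₁,…,P_r,I_r}` taking each point label at most once, of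
`(∏_{φ(i) = P_j} g_i(t_j)) · ∏_{j=0}^{r} Σ_{t_j<u₁<⋯<u_{k_j}<t_{j+1}} ∏_s g_{i_{j,s}}(u_s)`,
where `i_{j,1} < ⋯ < i_{j,k_j}` enumerate `φ⁻¹(I_j)`. -/
theorem stmt_9 (R : Type*) [CommRing R] (d : ℕ) (hd : 1 ≤ d) (g : Fin d → ℕ → R)
    (m : ℕ) (hm : 1 ≤ m) (r : ℕ) (t : ℕ → ℕ)
    (ht0 : t 0 = 0) (htm : t (r + 1) = m) (hmono : ∀ j ≤ r, t j < t (j + 1)) :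
    splitSum g Finset.univ 0 m =
      ∑ φ ∈ Finset.filter (fun φ : Fin d → Fin (2 * r + 1) =>
            Monotone φ ∧ ∀ v : Fin (2 * r + 1), Odd (v : ℕ) →
              (Finset.filter (fun i => φ i = v) Finset.univ).card ≤ 1)
          Finset.univ,
        (∏ i ∈ Finset.filter (fun i => Odd ((φ i : ℕ))) Finset.univ,
            g i (t (((φ i : ℕ) + 1) / 2))) *
          ∏ j ∈ Finset.range (r + 1),
            splitSum g (Finset.filter (fun i => (φ i : ℕ) = 2 * j) Finset.univ)
              (t j) (t (j + 1)) :=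
  stmt_9_general R d g m r t ht0 htm hmono
end
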